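/- If G is a perfect graph, x ∈ V(G), and H is a perfect graph vertex-disjoint from G, then the graph obtained from G by substituting H for x is perfect. -/

import Mathlib

open SimpleGraph

/-- Maximum total `h`-weight of a clique of `G` contained in `X`. -/
noncomputable def cliqueWgt {V : Type*} (G : SimpleGraph V) (h : V → ℕ) (X : Set V) : ℕ :=
  sSup {w | ∃ K : Finset V, G.IsClique (K : Set V) ∧ ↑K ⊆ X ∧ w = ∑ v ∈ K, h v}

/-- Clique number of `G`. -/
noncomputable def cliqueNum' {V : Type*} (G : SimpleGraph V) : ℕ :=
  sSup {n | ∃ K : Finset V, G.IsNClique n K}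

/-- `G` is perfect: every induced subgraph has chromatic number equal to clique number. -/
def IsPerfect {V : Type*} (G : SimpleGraph V) : Prop :=
  ∀ X : Set V, (G.induce X).chromaticNumber = (cliqueNum' (G.induce X) : ℕ∞)

/-- `G` is perfectly divisible for the weight function `h`: every (nonempty) induced
subgraph `G[F]` has a partition `(A, F \ A)` with `G[A]` perfect and
`ω_h(F \ A) < ω_h(F)`. -/
def PerfDivFor {V : Type*} (G : SimpleGraph V) (h : V → ℕ) : Prop :=
  ∀ F : Set V, F.Nonempty → ∃ A : Set V, A ⊆ F ∧ IsPerfect (G.induce A) ∧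
    cliqueWgt G h (F \ A) < cliqueWgt G h F

/-- Perfectly divisible: perfectly divisible for the all-ones weight function. -/
def PerfectlyDivisible {V : Type*} (G : SimpleGraph V) : Prop :=
  PerfDivFor G (fun _ => 1)

/-- Perfectly weight divisible: perfectly divisible for every positive integral weight. -/
def PerfWeightDiv {V : Type*} (G : SimpleGraph V) : Prop :=
  ∀ h : V → ℕ, (∀ v, 0 < h v) → PerfDivFor G h

/-- The graph obtained from `G` by substituting `H` for the vertex `x`. -/
def subst {V W : Type*} (G : SimpleGraph V) (x : V) (H : SimpleGraph W) :
    SimpleGraph ({v : V // v ≠ x} ⊕ W) where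
  Adj a b :=
    match a, b with
    | Sum.inl u, Sum.inl v => G.Adj u.1 v.1
    | Sum.inl u, Sum.inr _ => G.Adj u.1 x
    | Sum.inr _, Sum.inl v => G.Adj x v.1
    | Sum.inr w, Sum.inr w' => H.Adj w w'
  symm := ⟨by
    rintro (u | u) (v | v) hadj
    · exact G.adj_symm hadj
    · exact G.adj_symm hadj
    · exact G.adj_symm hadj
    · exact H.adj_symm hadj⟩
  loopless := ⟨by
    rintro (u | u) hadj
    · exact G.loopless.irrefl _ hadj
    · exact H.loopless.irrefl _ hadj⟩

section basics
variable {V W : Type*} {G : SimpleGraph V} {G' : SimpleGraph W}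

lemma cliqueNum'_set_nonempty (G : SimpleGraph V) :
    {n | ∃ K : Finset V, G.IsNClique n K}.Nonempty :=
  ⟨0, ∅, by simp [SimpleGraph.isNClique_empty]⟩

lemma cliqueNum'_bdd [Finite V] (G : SimpleGraph V) :
    BddAbove {n | ∃ K : Finset V, G.IsNClique n K} := by
  have := Fintype.ofFinite V
  exact ⟨Fintype.card V, by rintro n ⟨K, hK⟩; rw [← hK.2]; exact K.card_le_univ.trans (by simp)⟩

lemma le_cliqueNum' [Finite V] {n : ℕ} {K : Finset V} (h : G.IsNClique n K) :
    n ≤ cliqueNum' G :=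
  le_csSup (cliqueNum'_bdd G) ⟨K, h⟩

lemma cliqueNum'_spec [Finite V] (G : SimpleGraph V) :
    ∃ K : Finset V, G.IsNClique (cliqueNum' G) K :=
  Nat.sSup_mem (cliqueNum'_set_nonempty G) (cliqueNum'_bdd G)

lemma isNClique_map_emb {n : ℕ} {K : Finset V} (f : G ↪g G') (h : G.IsNClique n K) :
    G'.IsNClique n (K.map f.toEmbedding) := by
  constructor
  · rintro a ha b hb hab
    simp only [Finset.coe_map, Set.mem_image, Finset.mem_coe] at ha hb
    obtain ⟨a, ha, rfl⟩ := ha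
    obtain ⟨b, hb, rfl⟩ := hb
    exact f.map_adj_iff.2 (h.1 ha hb (fun hc => hab (by rw [hc])))
  · rw [Finset.card_map]; exact h.2

lemma cliqueNum'_le_of_embedding [Finite W] (f : G ↪g G') :
    cliqueNum' G ≤ cliqueNum' G' := by
  apply csSup_le (cliqueNum'_set_nonempty G)
  rintro n ⟨K, hK⟩
  exact le_cliqueNum' (isNClique_map_emb f hK)

lemma cliqueNum'_eq_of_iso [Finite V] [Finite W] (e : G ≃g G') :
    cliqueNum' G = cliqueNum' G' :=
  le_antisymm (cliqueNum'_le_of_embedding e.toEmbedding)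
    (cliqueNum'_le_of_embedding e.symm.toEmbedding)

lemma chromaticNumber_eq_of_iso (e : G ≃g G') :
    G.chromaticNumber = G'.chromaticNumber :=
  le_antisymm (chromaticNumber_mono_of_hom e.toEmbedding.toHom)
    (chromaticNumber_mono_of_hom e.symm.toEmbedding.toHom)

lemma cliqueNum'_le_chromaticNumber [Finite V] (G : SimpleGraph V) :
    (cliqueNum' G : ℕ∞) ≤ G.chromaticNumber := by
  obtain ⟨K, hK⟩ := cliqueNum'_spec G
  have := hK.1.card_le_chromaticNumber
  rwa [hK.2] at this

lemma chromEq_of_colorable [Finite V] (h : G.Colorable (cliqueNum' G)) :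
    G.chromaticNumber = (cliqueNum' G : ℕ∞) :=
  le_antisymm h.chromaticNumber_le (cliqueNum'_le_chromaticNumber G)

end basics

section perfect
variable {V W : Type*} {G : SimpleGraph V} {G' : SimpleGraph W}

/-- iso between double-induce and induce of image -/
noncomputable def induceInduceIso (G : SimpleGraph V) (A : Set V) (B : Set ↥A) :
    (G.induce A).induce B ≃g G.induce (Subtype.val '' B) where
  toEquiv := Equiv.Set.image Subtype.val B Subtype.val_injective
  map_rel_iff' := by
    rintro ⟨a, ha⟩ ⟨b, hb⟩
    simp [Equiv.Set.image, Equiv.Set.imageOfInjOn, SimpleGraph.comap]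

lemma IsPerfect.colorable [Finite V] (h : IsPerfect G) :
    G.Colorable (cliqueNum' G) := by
  have h1 := h Set.univ
  have e := induceUnivIso G
  have hc : G.chromaticNumber = (cliqueNum' (G.induce Set.univ) : ℕ∞) := by
    rw [← h1, chromaticNumber_eq_of_iso e]
  rw [cliqueNum'_eq_of_iso e] at hc
  rw [← chromaticNumber_le_iff_colorable]
  exact le_of_eq hc

lemma isPerfect_of_iso [Finite V] [Finite W] (e : G ≃g G') (h : IsPerfect G) :
    IsPerfect G' := by
  intro X
  set Y : Set V := e.symm '' X with hY
  have hXY : e '' Y = X := by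
    rw [hY, Set.image_image]; simp
  have eI : G.induce Y ≃g G'.induce X := by
    refine hXY ▸ ⟨Equiv.image e.toEquiv Y, ?_⟩
    rintro ⟨a, ha⟩ ⟨b, hb⟩
    simp [Equiv.image, SimpleGraph.comap, e.map_adj_iff]
  rw [← chromaticNumber_eq_of_iso eI, ← cliqueNum'_eq_of_iso eI]
  exact h Y

lemma IsPerfect.induce [Finite V] (h : IsPerfect G) (A : Set V) :
    IsPerfect (G.induce A) := by
  intro B
  have e := induceInduceIso G A B
  rw [chromaticNumber_eq_of_iso e, cliqueNum'_eq_of_iso e]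
  exact h _

end perfect

section dup
variable {U : Type*}

/-- The graph `Γ` with the vertex `v` duplicated by an adjacent twin. -/
def dup (Γ : SimpleGraph U) (v : U) : SimpleGraph (U ⊕ Unit) where
  Adj a b := match a, b with
    | Sum.inl a, Sum.inl b => Γ.Adj a b
    | Sum.inl a, Sum.inr _ => Γ.Adj a v ∨ a = v
    | Sum.inr _, Sum.inl b => Γ.Adj v b ∨ b = v
    | Sum.inr _, Sum.inr _ => False
  symm := ⟨by
    rintro (a|a) (b|b) h
    · exact Γ.adj_symm h
    · exact h.imp (fun hh => Γ.adj_symm hh) id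
    · exact h.imp (fun hh => Γ.adj_symm hh) id
    · exact h⟩
  loopless := ⟨by
    rintro (a|a) h
    · exact Γ.loopless.irrefl _ h
    · exact h⟩

/-- embedding of `Γ` into the duplicated graph. -/
def dupEmb (Γ : SimpleGraph U) (v : U) : Γ ↪g dup Γ v where
  toFun := Sum.inl
  inj' := Sum.inl_injective
  map_rel_iff' := Iff.rfl

lemma dup_colorable [Finite U] {Γ : SimpleGraph U} (h : IsPerfect Γ) (v : U) :
    (dup Γ v).Colorable (cliqueNum' (dup Γ v)) := by
  classical
  set ω := cliqueNum' Γ with hω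
  have hωd : ω ≤ cliqueNum' (dup Γ v) := cliqueNum'_le_of_embedding (dupEmb Γ v)
  obtain ⟨c⟩ : Γ.Colorable ω := h.colorable
  by_cases hcase : ∃ K : Finset U, Γ.IsNClique ω K ∧ v ∈ K
  · -- v is in a maximum clique : ω + 1 colors suffice and ω + 1 ≤ ωd
    obtain ⟨K, hK, hvK⟩ := hcase
    have hK' : (dup Γ v).IsNClique (ω + 1)
        ((K.map ⟨Sum.inl, Sum.inl_injective⟩) ∪ {Sum.inr ()}) := by
      constructor
      · rintro a ha b hb hab
        simp only [Finset.coe_union, Set.mem_union, Finset.coe_map,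
          Function.Embedding.coeFn_mk, Set.mem_image, Finset.mem_coe,
          Finset.coe_singleton, Set.mem_singleton_iff] at ha hb
        rcases ha with ⟨a', ha', rfl⟩ | rfl <;> rcases hb with ⟨b', hb', rfl⟩ | rfl
        · exact hK.1 ha' hb' (fun hc => hab (by rw [hc]))
        · show Γ.Adj a' v ∨ a' = v
          by_cases hav : a' = v
          · exact Or.inr hav
          · exact Or.inl (hK.1 ha' hvK hav)
        · show Γ.Adj v b' ∨ b' = v
          by_cases hbv : b' = v
          · exact Or.inr hbv
          · exact Or.inl (hK.1 hvK hb' (fun hc => hbv hc.symm))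
        · exact absurd rfl hab
      · rw [Finset.card_union_of_disjoint (by simp), Finset.card_map, hK.2,
          Finset.card_singleton]
    have h1 : ω + 1 ≤ cliqueNum' (dup Γ v) := le_cliqueNum' hK'
    have : (dup Γ v).Colorable (ω + 1) := by
      refine ⟨Coloring.mk (Sum.elim (fun u => (c u).castSucc) (fun _ => Fin.last ω)) ?_⟩
      rintro (a|a) (b|b) hab
      · simpa using (c.valid hab)
      · simp [(Fin.castSucc_lt_last (c a)).ne]
      · simp [(Fin.castSucc_lt_last (c b)).ne.symm]
      · exact absurd hab id
    exact this.mono h1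
  · -- v is in no maximum clique
    push_neg at hcase
    set A : Set U := {u | c u = c v ∧ u ≠ v} with hA
    set Γ₂ := Γ.induce Aᶜ with hΓ₂
    set ω₂ := cliqueNum' Γ₂ with hω₂
    obtain ⟨c₂⟩ : Γ₂.Colorable ω₂ := (h.induce Aᶜ).colorable
    have hlt : ω₂ < ω := by
      rcases lt_or_ge ω₂ ω with h' | h'
      · exact h'
      · exfalso
        obtain ⟨K₂, hK₂⟩ := cliqueNum'_spec Γ₂
        have hK₂' := isNClique_map_emb (SimpleGraph.Embedding.induce Aᶜ) hK₂
        set K' := K₂.map (SimpleGraph.Embedding.induce (G := Γ) Aᶜ).toEmbedding with hK'def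
        have hωω : ω₂ = ω := le_antisymm (cliqueNum'_le_of_embedding (SimpleGraph.Embedding.induce Aᶜ)) h'
        rw [show cliqueNum' Γ₂ = ω from hωω] at hK₂'
        have hvK' : v ∉ K' := hcase K' hK₂'
        -- c is injective on K'
        have hinj : Set.InjOn c (K' : Set U) := by
          intro a ha b hb hab
          by_contra hne
          exact (c.valid (hK₂'.1 ha hb hne)) hab
        have hcard : (K'.image c).card = ω := by
          rw [Finset.card_image_of_injOn hinj, hK₂'.2]
        have huniv : K'.image c = Finset.univ :=
          Finset.eq_univ_of_card _ (by rw [hcard]; simp)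
        have : c v ∈ K'.image c := by rw [huniv]; exact Finset.mem_univ _
        obtain ⟨u, huK, hcu⟩ := Finset.mem_image.1 this
        -- u ∈ A, but u comes from K₂ ⊆ Aᶜ
        have huv : u ≠ v := fun h => hvK' (h ▸ huK)
        have huA : u ∈ A := ⟨hcu, huv⟩
        obtain ⟨u₂, _, rfl⟩ := Finset.mem_map.1 huK
        exact u₂.2 huA
    -- color `dup` with ω₂ + 1 ≤ ω colors
    have hcol : (dup Γ v).Colorable (ω₂ + 1) := by
      classical
      have hAmem : ∀ u : U, u ∉ A → u ∈ Aᶜ := fun u hu => hu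
      have C : (dup Γ v).Coloring (Fin ω₂ ⊕ Unit) := by
        refine Coloring.mk (fun a => match a with
          | Sum.inl u => if hu : u ∈ A then Sum.inr () else
              (Sum.inl (c₂ ⟨u, hAmem u hu⟩) : Fin ω₂ ⊕ Unit)
          | Sum.inr _ => Sum.inr ()) ?_
        rintro (a|a) (b|b) hab
        · by_cases ha : a ∈ A <;> by_cases hb : b ∈ A
          · exfalso
            exact (c.valid hab) (ha.1.trans hb.1.symm)
          · simp [dif_pos ha, dif_neg hb]
          · simp [dif_pos hb, dif_neg ha]
          · simp only [dif_neg ha, dif_neg hb, ne_eq, Sum.inl.injEq]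
            exact c₂.valid (by exact hab)
        · have ha : a ∉ A := by
            rintro ⟨hca, hav⟩
            rcases hab with hadj | rfl
            · exact (c.valid hadj) hca
            · exact hav rfl
          simp [dif_neg ha]
        · have hb : b ∉ A := by
            rintro ⟨hcb, hbv⟩
            rcases hab with hadj | rfl
            · exact (c.valid (Γ.adj_symm hadj)) hcb
            · exact hbv rfl
          simp [dif_neg hb]
        · exact absurd hab id
      have := C.colorable
      simpa using this
    exact hcol.mono (le_trans (by omega) hωd)

end dup

section subst
variable {V W W' : Type*} {G : SimpleGraph V} {x : V} {H : SimpleGraph W} {H' : SimpleGraph W'}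

@[simp] lemma subst_adj_inl_inl {u v : {v : V // v ≠ x}} :
    (subst G x H).Adj (Sum.inl u) (Sum.inl v) ↔ G.Adj u.1 v.1 := Iff.rfl
@[simp] lemma subst_adj_inl_inr {u : {v : V // v ≠ x}} {w : W} :
    (subst G x H).Adj (Sum.inl u) (Sum.inr w) ↔ G.Adj u.1 x := Iff.rfl
@[simp] lemma subst_adj_inr_inl {u : {v : V // v ≠ x}} {w : W} :
    (subst G x H).Adj (Sum.inr w) (Sum.inl u) ↔ G.Adj x u.1 := Iff.rfl
@[simp] lemma subst_adj_inr_inr {w w' : W} :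
    (subst G x H).Adj (Sum.inr w) (Sum.inr w') ↔ H.Adj w w' := Iff.rfl

/-- congruence in the second argument of `subst`. -/
def substCongrRight (eH : H ≃g H') : subst G x H ≃g subst G x H' where
  toEquiv := Equiv.sumCongr (Equiv.refl _) eH.toEquiv
  map_rel_iff' := by
    rintro (u | u) (v | v)
    · exact Iff.rfl
    · exact Iff.rfl
    · exact Iff.rfl
    · exact eH.map_adj_iff

/-- iso between an induced subgraph of a complete graph and a complete graph. -/
def topInduceIso {α β : Type*} (B : Set α) (e : ↥B ≃ β) :
    (⊤ : SimpleGraph α).induce B ≃g (⊤ : SimpleGraph β) where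
  toEquiv := e
  map_rel_iff' := by
    intro a b
    show e a ≠ e b ↔ (↑a : α) ≠ ↑b
    simp [Subtype.ext_iff]

/-- auxiliary -/
def substIsoOfUniqueAux [DecidableEq V] [Unique W] : subst G x H ≃g G where
  toFun := Sum.elim Subtype.val (fun _ => x)
  invFun := fun v => if h : v = x then Sum.inr default else Sum.inl ⟨v, h⟩
  left_inv := by
    rintro (⟨v, hv⟩ | w)
    · exact dif_neg hv
    · simp [Subsingleton.elim default w]
  right_inv := by
    intro v
    by_cases h : v = x <;> simp [h]
  map_rel_iff' := by
    rintro (u | u) (v | v)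
    · exact Iff.rfl
    · exact Iff.rfl
    · exact Iff.rfl
    · show G.Adj x x ↔ H.Adj u v
      rw [Subsingleton.elim u v]
      simp

/-- substituting a one-point graph recovers `G`. -/
noncomputable def substIsoOfUnique [Unique W] : subst G x H ≃g G := by
  classical
  exact substIsoOfUniqueAux

/-- substituting an empty graph deletes `x`. -/
def substIsoOfIsEmpty [IsEmpty W] : subst G x H ≃g G.induce {v | v ≠ x} where
  toEquiv := Equiv.sumEmpty _ W
  map_rel_iff' := by
    rintro (u | u) (v | v)
    · exact Iff.rfl
    · exact isEmptyElim v
    · exact isEmptyElim u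
    · exact isEmptyElim u

end subst

section dupiso
variable {V : Type*}

/-- substituting `K_{k+2}` is duplicating a vertex of the `K_{k+1}` substitution. -/
def substTopSuccIso (G : SimpleGraph V) (x : V) (k : ℕ) :
    subst G x (⊤ : SimpleGraph (Fin (k + 2))) ≃g
      dup (subst G x (⊤ : SimpleGraph (Fin (k + 1)))) (Sum.inr 0) where
  toFun := fun a => match a with
    | Sum.inl u => Sum.inl (Sum.inl u)
    | Sum.inr i => Fin.lastCases (Sum.inr ()) (fun j => Sum.inl (Sum.inr j)) i
  invFun := fun a => match a with
    | Sum.inl (Sum.inl u) => Sum.inl u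
    | Sum.inl (Sum.inr j) => Sum.inr j.castSucc
    | Sum.inr _ => Sum.inr (Fin.last (k + 1))
  left_inv := by
    rintro (u | i)
    · rfl
    · induction i using Fin.lastCases with
      | last => simp
      | cast j => simp
  right_inv := by
    rintro ((u | j) | ⟨⟩) <;> simp
  map_rel_iff' := by
    rintro (u | i) (v | j) <;>
      simp only [Equiv.coe_fn_mk]
    · exact Iff.rfl
    · induction j using Fin.lastCases with
      | last =>
        rw [Fin.lastCases_last]
        show ((subst G x ⊤).Adj (Sum.inl u) (Sum.inr 0) ∨ Sum.inl u = Sum.inr 0) ↔ _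
        simp
      | cast j =>
        rw [Fin.lastCases_castSucc]
        exact Iff.rfl
    · induction i using Fin.lastCases with
      | last =>
        rw [Fin.lastCases_last]
        show ((subst G x ⊤).Adj (Sum.inr 0) (Sum.inl v) ∨ Sum.inl v = Sum.inr 0) ↔ _
        simp
      | cast i =>
        rw [Fin.lastCases_castSucc]
        exact Iff.rfl
    · induction i using Fin.lastCases with
      | last =>
        induction j using Fin.lastCases with
        | last =>
          rw [Fin.lastCases_last]
          show False ↔ _
          simp
        | cast j =>
          rw [Fin.lastCases_last, Fin.lastCases_castSucc]
          show ((subst G x ⊤).Adj (Sum.inr 0) (Sum.inr j) ∨ Sum.inr j = Sum.inr 0) ↔ _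
          rw [subst_adj_inr_inr (w := Fin.last (k+1)) (w' := j.castSucc),
            show ((⊤ : SimpleGraph (Fin (k+2))).Adj (Fin.last (k+1)) j.castSucc ↔ True) by
              simp [(Fin.castSucc_lt_last j).ne']]
          simp only [iff_true, subst_adj_inr_inr, top_adj, Sum.inr.injEq]
          by_cases hj : j = 0
          · exact Or.inr hj
          · exact Or.inl (Ne.symm hj)
      | cast i =>
        induction j using Fin.lastCases with
        | last =>
          rw [Fin.lastCases_last, Fin.lastCases_castSucc]
          show ((subst G x ⊤).Adj (Sum.inr i) (Sum.inr 0) ∨ Sum.inr i = Sum.inr 0) ↔ _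
          rw [subst_adj_inr_inr (w := i.castSucc) (w' := Fin.last (k+1)),
            show ((⊤ : SimpleGraph (Fin (k+2))).Adj i.castSucc (Fin.last (k+1)) ↔ True) by
              simp [(Fin.castSucc_lt_last i).ne]]
          simp only [iff_true, subst_adj_inr_inr, top_adj, Sum.inr.injEq]
          by_cases hi : i = 0
          · exact Or.inr hi
          · exact Or.inl hi
        | cast j =>
          rw [Fin.lastCases_castSucc, Fin.lastCases_castSucc]
          show (⊤ : SimpleGraph (Fin (k + 1))).Adj i j ↔ _
          simp [Fin.castSucc_inj]

end dupiso

section decomp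
variable {V W : Type*}

/-- The vertices of `G` (including `x`) that survive in the induced set `X`. -/
def substA (x : V) (X : Set ({v : V // v ≠ x} ⊕ W)) : Set V :=
  {v | v = x ∨ ∃ h : v ≠ x, (Sum.inl ⟨v, h⟩ : {v : V // v ≠ x} ⊕ W) ∈ X}

/-- The vertices of `H` that survive in the induced set `X`. -/
def substB (x : V) (X : Set ({v : V // v ≠ x} ⊕ W)) : Set W :=
  {w | (Sum.inr w : {v : V // v ≠ x} ⊕ W) ∈ X}

lemma substA_x (x : V) (X : Set ({v : V // v ≠ x} ⊕ W)) : x ∈ substA x X := Or.inl rfl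

/-- An induced subgraph of a substitution is a substitution of induced subgraphs. -/
def substInduceIso (G : SimpleGraph V) (x : V) (H : SimpleGraph W)
    (X : Set ({v : V // v ≠ x} ⊕ W)) :
    (subst G x H).induce X ≃g
      subst (G.induce (substA x X)) ⟨x, substA_x x X⟩ (H.induce (substB x X)) where
  toFun := fun s => match s with
    | ⟨Sum.inl ⟨v, hv⟩, hs⟩ =>
        Sum.inl ⟨⟨v, Or.inr ⟨hv, hs⟩⟩, fun h => hv (congrArg Subtype.val h)⟩
    | ⟨Sum.inr w, hs⟩ => Sum.inr ⟨w, hs⟩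
  invFun := fun a => match a with
    | Sum.inl ⟨⟨v, hvA⟩, hne⟩ =>
        ⟨Sum.inl ⟨v, fun h => hne (Subtype.ext h)⟩, by
          rcases hvA with h | ⟨h', hmem⟩
          · exact absurd h (fun h => hne (Subtype.ext h))
          · exact hmem⟩
    | Sum.inr ⟨w, hw⟩ => ⟨Sum.inr w, hw⟩
  left_inv := by
    rintro ⟨(⟨v, hv⟩ | w), hs⟩ <;> rfl
  right_inv := by
    rintro (⟨⟨v, hvA⟩, hne⟩ | ⟨w, hw⟩) <;> rfl
  map_rel_iff' := by
    rintro ⟨(⟨v, hv⟩ | w), hs⟩ ⟨(⟨v', hv'⟩ | w'), hs'⟩ <;> exact Iff.rfl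

end decomp

section main
universe u

lemma colorable_cliqueNum'_of_iso {α β : Type*} [Finite α] [Finite β]
    {G : SimpleGraph α} {G' : SimpleGraph β} (e : G ≃g G')
    (h : G'.Colorable (cliqueNum' G')) : G.Colorable (cliqueNum' G) := by
  rw [cliqueNum'_eq_of_iso e]
  exact h.of_hom e.toEmbedding.toHom

lemma subst_top_perfect : ∀ (q : ℕ), ∀ {V : Type u} [Finite V] (G : SimpleGraph V) (x : V),
    IsPerfect G → IsPerfect (subst G x (⊤ : SimpleGraph (Fin q))) := by
  intro q
  induction q using Nat.strong_induction_on with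
  | _ q IH =>
  intro V _ G x hG X
  have e := substInduceIso G x (⊤ : SimpleGraph (Fin q)) X
  rw [chromaticNumber_eq_of_iso e, cliqueNum'_eq_of_iso e]
  have hG' : IsPerfect (G.induce (substA x X)) := hG.induce _
  have hft : Fintype ↥(substB x X) := Fintype.ofFinite _
  obtain ⟨n, hn⟩ : ∃ n, Fintype.card ↥(substB x X) = n := ⟨_, rfl⟩
  have hnq : n ≤ q := by
    rw [← hn]
    have := Fintype.card_le_of_injective
      (Subtype.val : ↥(substB (W := Fin q) x X) → Fin q) Subtype.val_injective
    simpa using this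
  have eB : ((⊤ : SimpleGraph (Fin q)).induce (substB x X)) ≃g (⊤ : SimpleGraph (Fin n)) :=
    topInduceIso _ ((Fintype.equivFin _).trans (finCongr hn))
  have e2 := substCongrRight (G := G.induce (substA x X)) (x := ⟨x, substA_x x X⟩) eB
  rw [chromaticNumber_eq_of_iso e2, cliqueNum'_eq_of_iso e2]
  apply chromEq_of_colorable
  match n, hnq with
  | 0, _ =>
    exact colorable_cliqueNum'_of_iso substIsoOfIsEmpty ((hG'.induce _).colorable)
  | 1, _ =>
    exact colorable_cliqueNum'_of_iso substIsoOfUnique hG'.colorable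
  | (k+2), hk =>
    have hperf : IsPerfect (subst (G.induce (substA x X)) ⟨x, substA_x x X⟩
        (⊤ : SimpleGraph (Fin (k+1)))) := IH (k+1) (by omega) _ _ hG'
    exact colorable_cliqueNum'_of_iso (substTopSuccIso _ _ k) (dup_colorable hperf _)

end main

section final
variable {V W : Type*}

lemma cliqueNum'_subst_top_le [Finite V] [Finite W] (G : SimpleGraph V) (x : V)
    (H : SimpleGraph W) :
    cliqueNum' (subst G x (⊤ : SimpleGraph (Fin (cliqueNum' H)))) ≤
      cliqueNum' (subst G x H) := by
  classical
  obtain ⟨K, hK⟩ := cliqueNum'_spec (subst G x (⊤ : SimpleGraph (Fin (cliqueNum' H))))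
  set L := K.toLeft with hL
  set S := K.toRight with hS
  obtain ⟨M, hM⟩ := cliqueNum'_spec H
  have hScard : S.card ≤ M.card := by
    rw [hM.2]
    calc S.card ≤ Fintype.card (Fin (cliqueNum' H)) := Finset.card_le_univ S |>.trans (by simp)
    _ = cliqueNum' H := by simp
  obtain ⟨M', hM'sub, hM'card⟩ := Finset.exists_subset_card_eq hScard
  set K' : Finset ({v : V // v ≠ x} ⊕ W) :=
    L.map ⟨Sum.inl, Sum.inl_injective⟩ ∪ M'.map ⟨Sum.inr, Sum.inr_injective⟩ with hK'
  have hclique : (subst G x H).IsNClique (cliqueNum'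
      (subst G x (⊤ : SimpleGraph (Fin (cliqueNum' H))))) K' := by
    constructor
    · rintro a ha b hb hab
      simp only [hK', Finset.coe_union, Set.mem_union, Finset.coe_map,
        Function.Embedding.coeFn_mk, Set.mem_image, Finset.mem_coe] at ha hb
      rcases ha with ⟨a', ha', rfl⟩ | ⟨a', ha', rfl⟩ <;>
        rcases hb with ⟨b', hb', rfl⟩ | ⟨b', hb', rfl⟩
      · exact hK.1 (Finset.mem_toLeft.1 ha') (Finset.mem_toLeft.1 hb')
          (fun hc => hab (congrArg Sum.inl (Sum.inl_injective hc)))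
      · -- inl, inr : need G.Adj a' x ; S is nonempty since M' is
        have hSne : S.Nonempty := by
          rw [← Finset.card_pos, ← hM'card]
          exact Finset.card_pos.2 ⟨_, hb'⟩
        obtain ⟨s, hs⟩ := hSne
        exact hK.1 (Finset.mem_toLeft.1 ha') (Finset.mem_toRight.1 hs) (by simp)
      · have hSne : S.Nonempty := by
          rw [← Finset.card_pos, ← hM'card]
          exact Finset.card_pos.2 ⟨_, ha'⟩
        obtain ⟨s, hs⟩ := hSne
        exact ((subst G x H).adj_symm
          (hK.1 (Finset.mem_toLeft.1 hb') (Finset.mem_toRight.1 hs) (by simp)))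
      · exact hM.1 (hM'sub ha') (hM'sub hb')
          (fun hc => hab (congrArg Sum.inr hc))

    · rw [hK', Finset.card_union_of_disjoint (by simp [Finset.disjoint_left]),
        Finset.card_map, Finset.card_map, hM'card, ← hK.2, ← Finset.card_toLeft_add_card_toRight]
  exact le_cliqueNum' hclique

lemma subst_colorable [Finite V] [Finite W] (G : SimpleGraph V) (x : V)
    (H : SimpleGraph W) (hG : IsPerfect G) (hH : IsPerfect H) :
    (subst G x H).Colorable (cliqueNum' (subst G x H)) := by
  obtain ⟨cH⟩ := hH.colorable
  have hq : IsPerfect (subst G x (⊤ : SimpleGraph (Fin (cliqueNum' H)))) :=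
    subst_top_perfect _ G x hG
  obtain ⟨c⟩ := hq.colorable
  have hcol : (subst G x H).Colorable
      (cliqueNum' (subst G x (⊤ : SimpleGraph (Fin (cliqueNum' H))))) := by
    refine ⟨Coloring.mk (fun a => match a with
      | Sum.inl u => c (Sum.inl u)
      | Sum.inr w => c (Sum.inr (cH w))) ?_⟩
    rintro (u | u) (v | v) hab
    · exact c.valid (show (subst G x _).Adj (Sum.inl u) (Sum.inl v) from hab)
    · exact c.valid (show (subst G x _).Adj (Sum.inl u) (Sum.inr (cH v)) from hab)
    · exact c.valid (show (subst G x _).Adj (Sum.inr (cH u)) (Sum.inl v) from hab)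
    · exact c.valid (show (subst G x _).Adj (Sum.inr (cH u)) (Sum.inr (cH v)) from
        cH.valid hab)
  exact hcol.mono (cliqueNum'_subst_top_le G x H)

theorem subst_perfect' [Finite V] [Finite W]
    (G : SimpleGraph V) (H : SimpleGraph W) (x : V)
    (hG : IsPerfect G) (hH : IsPerfect H) : IsPerfect (subst G x H) := by
  intro X
  have e := substInduceIso G x H X
  rw [chromaticNumber_eq_of_iso e, cliqueNum'_eq_of_iso e]
  exact chromEq_of_colorable (subst_colorable _ _ _ (hG.induce _) (hH.induce _))

end final

theorem subst_perfect {V W : Type*} [Fintype V] [Fintype W]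
    (G : SimpleGraph V) (H : SimpleGraph W) (x : V)
    (hG : IsPerfect G) (hH : IsPerfect H) : IsPerfect (subst G x H) :=
  subst_perfect' G H x hG hH
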